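/- Let f be a special causal function, ε > 0, and suppose for each strict value a of f and each interval (a₋, a₊) ∋ a there exists a Lyapunov function τ : M → [a₋, a₊] with τ = a₊ on {f ≥ a₊} and τ = a₋ on {f ≤ a₋}. Then there exists a Lyapunov function τ with |τ(x) − f(x)| ≤ ε for all x ∈ M. -/

import Mathlib

/-!
Pick strict values `a k ∈ (kε, (k+1)ε)` and step Lyapunov functions `T k` climbing from `kε`
to `(k+1)ε` across the level `a k`; the glued function `x ↦ T ⌊f x / ε⌋ x` stays within `ε` of
`f`. Near a point where `f` lies strictly between `(m-1)ε` and `(m+1)ε` the glued function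
equals the telescoping sum `∑ k ∈ [m-1, m+1), (T k - kε) + (m-1)ε`, a sum of Lyapunov functions.
Such sums are again Lyapunov, as the differential of each summand is zero or positive on the cone.
-/

open Manifold Set MeasureTheory Filter

variable {E : Type*} [NormedAddCommGroup E] [NormedSpace ℝ E]
  {H : Type*} [TopologicalSpace H] {I : ModelWithCorners ℝ E H}
  {M : Type*} [TopologicalSpace M] [ChartedSpace H M] [IsManifold I (⊤ : ℕ∞) M]

/-- A closed cone field: each fiber is a convex cone, closed after adding `0`, either
singular (the whole tangent space) or regular (contained in an open half space),
and the union with the zero section is closed in the tangent bundle. -/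
def IsClosedConeField (I : ModelWithCorners ℝ E H) (M : Type*) [TopologicalSpace M]
    [ChartedSpace H M] [IsManifold I (⊤ : ℕ∞) M] (C : ∀ x : M, Set (TangentSpace I x)) : Prop :=
  (∀ x, Convex ℝ (C x)) ∧
  (∀ x, ∀ v ∈ C x, ∀ t : ℝ, 0 < t → t • v ∈ C x) ∧
  (∀ x, IsClosed (insert (0 : TangentSpace I x) (C x))) ∧
  IsClosed {p : TangentBundle I M | p.snd = 0 ∨ p.snd ∈ C p.proj} ∧
  (∀ x : M, C x = Set.univ ∨ ∃ p : TangentSpace I x →L[ℝ] ℝ, ∀ v ∈ C x, 0 < p v)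

/-- A causal curve for the cone field `C` on `[a,b]`: continuous, almost everywhere
differentiable with derivative in the cone (or zero). -/
def IsCausalCurve (C : ∀ x : M, Set (TangentSpace I x)) (γ : ℝ → M) (a b : ℝ) : Prop :=
  ContinuousOn γ (Set.Icc a b) ∧
  ∀ᵐ t ∂(volume.restrict (Set.Icc a b)),
    MDifferentiableAt 𝓘(ℝ, ℝ) I γ t ∧
      mfderiv 𝓘(ℝ, ℝ) I γ t (1 : ℝ) ∈ insert (0 : TangentSpace I (γ t)) (C (γ t))

/-- The causal future of a point. -/
def causalFuture (C : ∀ x : M, Set (TangentSpace I x)) (x : M) : Set M :=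
  insert x {y | ∃ a b : ℝ, a < b ∧ ∃ γ : ℝ → M, IsCausalCurve C γ a b ∧
    γ a = x ∧ γ b = y ∧ ∃ s ∈ Set.Icc a b, ∃ t ∈ Set.Icc a b, γ s ≠ γ t}

/-- A causal function. -/
def IsCausalFun (C : ∀ x : M, Set (TangentSpace I x)) (f : M → ℝ) : Prop :=
  Continuous f ∧ ∀ x, ∀ y ∈ causalFuture C x, f x ≤ f y

/-- A Lyapunov function for `C`. -/
def IsLyapunov (C : ∀ x : M, Set (TangentSpace I x)) (τ : M → ℝ) : Prop :=
  ContMDiff I 𝓘(ℝ, ℝ) (⊤ : ℕ∞) τ ∧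
  ∀ x : M, mfderiv I 𝓘(ℝ, ℝ) τ x ≠ 0 → ∀ v ∈ C x, 0 < show ℝ from mfderiv I 𝓘(ℝ, ℝ) τ x v

/-- A neutral point of a function `f` with respect to `C`. -/
def IsNeutralPt (C : ∀ x : M, Set (TangentSpace I x)) (f : M → ℝ) (x : M) : Prop :=
  C x = Set.univ ∨ ∃ y ∈ causalFuture C x, y ≠ x ∧ f y = f x

/-- A strict value of `f`. -/
def IsStrictValue (C : ∀ x : M, Set (TangentSpace I x)) (f : M → ℝ) (a : ℝ) : Prop :=
  ¬ ∃ x : M, IsNeutralPt C f x ∧ f x = a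

/-- A special causal function. -/
def IsSpecialCausal (C : ∀ x : M, Set (TangentSpace I x)) (f : M → ℝ) : Prop :=
  IsCausalFun C f ∧ Dense {a : ℝ | IsStrictValue C f a}

open Topology

theorem Finset.sum_Ico_sub_eq_of_le {c t : ℤ → ℝ} {y : ℝ} (hc : Monotone c)
    (hup : ∀ k, c (k + 1) ≤ y → t k = c (k + 1)) {a b : ℤ} (hab : a ≤ b) (hby : c b ≤ y) :
    ∑ k ∈ Finset.Ico a b, (t k - c k) = c b - c a := by
  induction b, hab using Int.leInduction with
  | base => simp
  | succ b hab ih =>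
    rw [← Finset.sum_Ico_add_eq_sum_Ico_add_one hab, ih (le_trans (hc (by omega)) hby),
      hup b hby]
    ring

theorem Finset.sum_Ico_sub_eq_of_mem {c t : ℤ → ℝ} {y : ℝ} (hc : Monotone c)
    (hup : ∀ k, c (k + 1) ≤ y → t k = c (k + 1)) (hdn : ∀ k, y ≤ c k → t k = c k)
    {a b m : ℤ} (ham : a ≤ m) (hmb : m < b) (hmy : c m ≤ y) (hym : y ≤ c (m + 1)) :
    ∑ k ∈ Finset.Ico a b, (t k - c k) = t m - c a := by
  replace hmb : m + 1 ≤ b := hmb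
  induction b, hmb using Int.leInduction with
  | base =>
    rw [← Finset.sum_Ico_add_eq_sum_Ico_add_one ham, sum_Ico_sub_eq_of_le hc hup ham hmy]
    ring
  | succ b hmb ih =>
    rw [← Finset.sum_Ico_add_eq_sum_Ico_add_one (by omega), ih, hdn b (hym.trans (hc hmb))]
    ring

theorem Int.floor_div_mul_le {y ε : ℝ} (hε : 0 < ε) : (⌊y / ε⌋ : ℝ) * ε ≤ y :=
  (le_div_iff₀ hε).1 (Int.floor_le _)

theorem Int.lt_floor_div_add_one_mul {y ε : ℝ} (hε : 0 < ε) :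
    y < ((⌊y / ε⌋ + 1 : ℤ) : ℝ) * ε := by
  push_cast
  exact (div_lt_iff₀ hε).1 (Int.lt_floor_add_one _)

section

omit [IsManifold I (⊤ : ℕ∞) M]

namespace IsLyapunov

variable {C : ∀ x : M, Set (TangentSpace I x)} {τ σ : M → ℝ}

theorem mdifferentiableAt (hτ : IsLyapunov C τ) (x : M) : MDifferentiableAt I 𝓘(ℝ, ℝ) τ x :=
  hτ.1.mdifferentiableAt (by simp)

theorem mfderiv_nonneg (hτ : IsLyapunov C τ) {x : M} {v : TangentSpace I x} (hv : v ∈ C x) :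
    0 ≤ show ℝ from mfderiv I 𝓘(ℝ, ℝ) τ x v := by
  by_cases h : mfderiv I 𝓘(ℝ, ℝ) τ x = 0
  · rw [h]
    exact le_rfl
  · exact (hτ.2 x h v hv).le

theorem const (C : ∀ x : M, Set (TangentSpace I x)) (c : ℝ) : IsLyapunov C fun _ : M => c :=
  ⟨contMDiff_const, fun _ h => absurd mfderiv_const h⟩

theorem add (hτ : IsLyapunov C τ) (hσ : IsLyapunov C σ) : IsLyapunov C fun x => τ x + σ x := by
  refine ⟨hτ.1.add hσ.1, fun x hne v hv => ?_⟩
  have hsum := mfderiv_add (hτ.mdifferentiableAt x) (hσ.mdifferentiableAt x)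
  change mfderiv I 𝓘(ℝ, ℝ) (τ + σ) x ≠ 0 at hne
  change 0 < (show ℝ from mfderiv I 𝓘(ℝ, ℝ) (τ + σ) x v)
  rw [hsum] at hne
  rw [show (show ℝ from mfderiv I 𝓘(ℝ, ℝ) (τ + σ) x v) =
      (show ℝ from mfderiv I 𝓘(ℝ, ℝ) τ x v) + (show ℝ from mfderiv I 𝓘(ℝ, ℝ) σ x v) from
    DFunLike.congr_fun hsum v]
  by_cases hτx : mfderiv I 𝓘(ℝ, ℝ) τ x = 0
  · have hσx : mfderiv I 𝓘(ℝ, ℝ) σ x ≠ 0 := fun hσx =>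
      hne (by rw [hτx, hσx]; exact add_zero _)
    exact add_pos_of_nonneg_of_pos (hτ.mfderiv_nonneg hv) (hσ.2 x hσx v hv)
  · exact add_pos_of_pos_of_nonneg (hτ.2 x hτx v hv) (hσ.mfderiv_nonneg hv)

theorem sum {ι : Type*} (s : Finset ι) {τ : ι → M → ℝ} (hτ : ∀ i ∈ s, IsLyapunov C (τ i)) :
    IsLyapunov C fun x => ∑ i ∈ s, τ i x := by
  classical
  induction s using Finset.induction_on with
  | empty => simpa using const C 0
  | insert i s hi ih =>
    simp only [Finset.sum_insert hi]
    exact (hτ i (Finset.mem_insert_self i s)).add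
      (ih fun j hj => hτ j (Finset.mem_insert_of_mem hj))

theorem of_locally (h : ∀ x, ∃ σ : M → ℝ, IsLyapunov C σ ∧ τ =ᶠ[𝓝 x] σ) : IsLyapunov C τ := by
  refine ⟨fun x => ?_, fun x => ?_⟩
  · obtain ⟨σ, hσ, hτσ⟩ := h x
    exact (hσ.1 x).congr_of_eventuallyEq hτσ
  · obtain ⟨σ, hσ, hτσ⟩ := h x
    rw [hτσ.mfderiv_eq]
    exact hσ.2 x

end IsLyapunov

theorem isLyapunov_glue_floor {C : ∀ x : M, Set (TangentSpace I x)} {f : M → ℝ}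
    (hf : Continuous f) {ε : ℝ} (hε : 0 < ε) {T : ℤ → M → ℝ} (hT : ∀ k, IsLyapunov C (T k))
    (hup : ∀ k x, ((k + 1 : ℤ) : ℝ) * ε ≤ f x → T k x = ((k + 1 : ℤ) : ℝ) * ε)
    (hdn : ∀ (k : ℤ) x, f x ≤ k * ε → T k x = (k : ℝ) * ε) :
    IsLyapunov C fun x => T ⌊f x / ε⌋ x := by
  have hc : Monotone fun k : ℤ => (k : ℝ) * ε := fun _ _ h =>
    mul_le_mul_of_nonneg_right (Int.cast_le.2 h) hε.le
  refine IsLyapunov.of_locally fun x₀ => ?_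
  set m₀ := ⌊f x₀ / ε⌋
  refine ⟨fun x => ∑ k ∈ Finset.Ico (m₀ - 1) (m₀ + 1), (T k x + -(↑k * ε))
      + ((m₀ - 1 : ℤ) : ℝ) * ε,
    (IsLyapunov.sum _ fun k _ => (hT k).add (.const C _)).add (.const C _), ?_⟩
  have hU : f ⁻¹' Ioo (((m₀ - 1 : ℤ) : ℝ) * ε) (((m₀ + 1 : ℤ) : ℝ) * ε) ∈ 𝓝 x₀ := by
    refine (isOpen_Ioo.preimage hf).mem_nhds ⟨?_, Int.lt_floor_div_add_one_mul hε⟩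
    have := Int.floor_div_mul_le (y := f x₀) hε
    push_cast
    nlinarith
  filter_upwards [hU] with x ⟨hlo, hhi⟩
  have hlo' : m₀ - 1 ≤ ⌊f x / ε⌋ := Int.le_floor.2 ((le_div_iff₀ hε).2 hlo.le)
  have hhi' : ⌊f x / ε⌋ < m₀ + 1 := Int.floor_lt.2 ((div_lt_iff₀ hε).2 hhi)
  simp only [← sub_eq_add_neg]
  rw [Finset.sum_Ico_sub_eq_of_mem hc (hup · x) (hdn · x) hlo' hhi'
    (Int.floor_div_mul_le hε) (Int.lt_floor_div_add_one_mul hε).le]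
  ring

end

theorem lyapunov_approximation_general (C : ∀ x : M, Set (TangentSpace I x))
    (f : M → ℝ) (hf : IsSpecialCausal C f)
    (ε : ℝ) (hε : 0 < ε)
    (hstep : ∀ a : ℝ, IsStrictValue C f a → ∀ am ap : ℝ, am < a → a < ap →
      ∃ τ : M → ℝ, IsLyapunov C τ ∧ (∀ x : M, τ x ∈ Set.Icc am ap) ∧
        (∀ x : M, ap ≤ f x → τ x = ap) ∧ ∀ x : M, f x ≤ am → τ x = am) :
    ∃ τ : M → ℝ, IsLyapunov C τ ∧ ∀ x : M, |τ x - f x| ≤ ε := by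
  have hstrict (k : ℤ) :
      ∃ a, IsStrictValue C f a ∧ a ∈ Ioo ((k : ℝ) * ε) (((k + 1 : ℤ) : ℝ) * ε) :=
    hf.2.exists_between (by gcongr; simp)
  choose a ha haI using hstrict
  choose T hT hTmem hTup hTdn using fun k => hstep (a k) (ha k) _ _ (haI k).1 (haI k).2
  refine ⟨fun x => T ⌊f x / ε⌋ x, isLyapunov_glue_floor hf.1.1 hε hT hTup hTdn, fun x => ?_⟩
  have hlo := Int.floor_div_mul_le (y := f x) hε
  have hhi := Int.lt_floor_div_add_one_mul (y := f x) hε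
  have hT := hTmem ⌊f x / ε⌋ x
  push_cast at hhi hT
  rw [abs_le]
  constructor <;> linarith [hT.1, hT.2]

/-- Approximation of a special causal function by Lyapunov functions, given step
Lyapunov functions on all intervals around strict values. -/
theorem lyapunov_approximation (C : ∀ x : M, Set (TangentSpace I x))
    (hC : IsClosedConeField I M C) (f : M → ℝ) (hf : IsSpecialCausal C f)
    (ε : ℝ) (hε : 0 < ε)
    (hstep : ∀ a : ℝ, IsStrictValue C f a → ∀ am ap : ℝ, am < a → a < ap →
      ∃ τ : M → ℝ, IsLyapunov C τ ∧ (∀ x : M, τ x ∈ Set.Icc am ap) ∧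
        (∀ x : M, ap ≤ f x → τ x = ap) ∧ ∀ x : M, f x ≤ am → τ x = am) :
    ∃ τ : M → ℝ, IsLyapunov C τ ∧ ∀ x : M, |τ x - f x| ≤ ε :=
  lyapunov_approximation_general C f hf ε hε hstep
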